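/- arXiv:1904.12988 — 2 statements merged into one kernel-verified Lean document; each statement's English description precedes it below -/
import Mathlib

section
/- In the merge fluid queue setting, set q3up = θ − c3min/w. For every mode i ∈ I and every q1 ≥ 0, q2 ≥ 0 with q1 + q2 > 0, f13(i, (q1, q2, q3up)) + f23(i, (q1, q2, q3up)) ≤ f3(i, (q1, q2, q3up)); equivalently, the downstream drift f13 + f23 − f3 is nonpositive on the upper q3-boundary. In particular f13 + f23 ≤ w·(θ − q3up) = c3min and min(v·q3up, c3(i)) ≥ c3min. -/
/-!
On the boundary `q3 = θ - c3min / w` the congested supply `w (θ - q3)` equals `c3min`. The merge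
splits this supply in proportion to `q1 : q2`, so the two inflows add up to at most `c3min`. The
outflow `min (v q3) (c3 i)` is at least `c3min`: trivially for the capacity term, and for the
free-flow term because `c3min ≤ cmax ≤ v w θ / (v + w)` rearranges to `c3min ≤ v (θ - c3min / w)`.
-/

lemma proportional_split_add {q1 q2 : ℝ} (hq : 0 < q1 + q2) (s : ℝ) :
    q1 / (q1 + q2) * s + q2 / (q1 + q2) * s = s := by
  field_simp

lemma min_min_le_middle (a b c : ℝ) : min a (min b c) ≤ b :=
  (min_le_right _ _).trans (min_le_left _ _)

lemma merge_inflow_le_supply {q1 q2 : ℝ} (hq : 0 < q1 + q2) (a1 a2 b1 b2 s : ℝ) :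
    min a1 (min (q1 / (q1 + q2) * s) b1) + min a2 (min (q2 / (q1 + q2) * s) b2) ≤ s :=
  calc min a1 (min (q1 / (q1 + q2) * s) b1) + min a2 (min (q2 / (q1 + q2) * s) b2)
      ≤ q1 / (q1 + q2) * s + q2 / (q1 + q2) * s :=
        add_le_add (min_min_le_middle _ _ _) (min_min_le_middle _ _ _)
    _ = s := proportional_split_add hq s

lemma supply_at_congested_boundary {w : ℝ} (hw : 0 < w) (θ c : ℝ) :
    w * (θ - (θ - c / w)) = c := by
  field_simp
  ring

lemma le_free_flow_at_congested_boundary {v w θ c : ℝ} (hv : 0 < v) (hw : 0 < w)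
    (hc : c ≤ v * w * θ / (v + w)) : c ≤ v * (θ - c / w) := by
  rw [le_div_iff₀ (by positivity)] at hc
  rw [mul_sub, mul_div_assoc', le_sub_comm, div_le_iff₀ hw]
  linarith

theorem merge_upper_q3_boundary_general
    {I : Type*} [Fintype I] [Nonempty I]
    (v w θ : ℝ) (hv : 0 < v) (hw : 0 < w)
    (c1 c2 c3 : I → ℝ)
    (cmax c3min : ℝ)
    (hcmax : cmax = Finset.univ.sup' Finset.univ_nonempty
      (fun i => max (c1 i) (max (c2 i) (c3 i))))
    (hc3min : c3min = Finset.univ.inf' Finset.univ_nonempty c3)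
    (hcap : cmax ≤ v * w * θ / (v + w))
    (q3up : ℝ) (hq3up : q3up = θ - c3min / w) :
    ∀ (i : I) (q1 q2 : ℝ), 0 ≤ q1 → 0 ≤ q2 → 0 < q1 + q2 →
      (min (v * q1) (min (q1 / (q1 + q2) * (w * (θ - q3up))) (c1 i))
          + min (v * q2) (min (q2 / (q1 + q2) * (w * (θ - q3up))) (c2 i))
        ≤ min (v * q3up) (c3 i)) ∧
      (min (v * q1) (min (q1 / (q1 + q2) * (w * (θ - q3up))) (c1 i))
          + min (v * q2) (min (q2 / (q1 + q2) * (w * (θ - q3up))) (c2 i))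
        ≤ w * (θ - q3up)) ∧
      w * (θ - q3up) = c3min ∧
      c3min ≤ min (v * q3up) (c3 i) := by
  intro i q1 q2 _ _ hq
  have hsupply : w * (θ - q3up) = c3min := hq3up ▸ supply_at_congested_boundary hw θ c3min
  have hc3min_le : c3min ≤ c3 i := hc3min ▸ Finset.inf'_le _ (Finset.mem_univ i)
  have hc3_le_cmax : c3 i ≤ cmax :=
    hcmax ▸ (le_max_right _ _).trans ((le_max_right _ _).trans
      (Finset.le_sup' (fun j => max (c1 j) (max (c2 j) (c3 j))) (Finset.mem_univ i)))
  have hout : c3min ≤ min (v * q3up) (c3 i) :=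
    le_min (hq3up ▸ le_free_flow_at_congested_boundary hv hw
      ((hc3min_le.trans hc3_le_cmax).trans hcap)) hc3min_le
  have hin := merge_inflow_le_supply hq (v * q1) (v * q2) (c1 i) (c2 i) (w * (θ - q3up))
  exact ⟨hin.trans (hsupply ▸ hout), hin, hsupply, hout⟩

/-- Upper boundary inequality in the proof of Proposition 2 (merge fluid queue):
on the upper `q3`-boundary `q3 = q3up = θ - c3min/w`, the downstream drift
`f13 + f23 - f3` is nonpositive; in particular `f13 + f23 ≤ w·(θ - q3up) = c3min`
and `min (v·q3up) (c3 i) ≥ c3min`. -/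
theorem merge_upper_q3_boundary
    {I : Type*} [Fintype I] [Nonempty I]
    (v w θ : ℝ) (hv : 0 < v) (hw : 0 < w) (hθ : 0 < θ)
    (c1 c2 c3 : I → ℝ)
    (hc1 : ∀ i, 0 < c1 i) (hc2 : ∀ i, 0 < c2 i) (hc3 : ∀ i, 0 < c3 i)
    (cmax c3min : ℝ)
    (hcmax : cmax = Finset.univ.sup' Finset.univ_nonempty
      (fun i => max (c1 i) (max (c2 i) (c3 i))))
    (hc3min : c3min = Finset.univ.inf' Finset.univ_nonempty c3)
    (hcap : cmax ≤ v * w * θ / (v + w))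
    (q3up : ℝ) (hq3up : q3up = θ - c3min / w) :
    ∀ (i : I) (q1 q2 : ℝ), 0 ≤ q1 → 0 ≤ q2 → 0 < q1 + q2 →
      (min (v * q1) (min (q1 / (q1 + q2) * (w * (θ - q3up))) (c1 i))
          + min (v * q2) (min (q2 / (q1 + q2) * (w * (θ - q3up))) (c2 i))
        ≤ min (v * q3up) (c3 i)) ∧
      (min (v * q1) (min (q1 / (q1 + q2) * (w * (θ - q3up))) (c1 i))
          + min (v * q2) (min (q2 / (q1 + q2) * (w * (θ - q3up))) (c2 i))
        ≤ w * (θ - q3up)) ∧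
      w * (θ - q3up) = c3min ∧
      c3min ≤ min (v * q3up) (c3 i) :=
  merge_upper_q3_boundary_general v w θ hv hw c1 c2 c3 cmax c3min hcmax hc3min hcap q3up hq3up
end

section
/- Let I be a finite nonempty mode set, c1, c2, c3 : I → ℝ nonnegative, p : I → ℝ nonnegative, and a1, a2 ≥ 0 constants. Let σ : [0,∞) → I be measurable with (1/t)·∫₀ᵗ 1{σ(τ)=i} dτ → p(i) as t → ∞ for every i ∈ I. Let f13, f23, f3 : [0,∞) → ℝ be measurable with 0 ≤ f13(τ) ≤ c1(σ(τ)), 0 ≤ f23(τ) ≤ c2(σ(τ)), and 0 ≤ f3(τ) ≤ c3(σ(τ)) for almost every τ. Suppose the queue lengths Q1(t) = Q1(0) + ∫₀ᵗ (a1 − f13), Q2(t) = Q2(0) + ∫₀ᵗ (a2 − f23), and Q3(t) = Q3(0) + ∫₀ᵗ (f13 + f23 − f3) satisfy Qj(t)/t → 0 as t → ∞ for j = 1, 2, 3. Then a1 ≤ Σ_{i∈I} p(i)·c1(i), a2 ≤ Σ_{i∈I} p(i)·c2(i), and a1 + a2 ≤ Σ_{i∈I} p(i)·c3(i). -/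
/-!
Sublinear growth of a queue means that its long-run average outflow equals its long-run
average inflow; this turns the three queue hypotheses into the time averages
`a1`, `a2`, `a1 + a2` of `f13`, `f23`, `f3`. Each flow is dominated by `c (σ τ)`, whose
time average is `∑ i, p i * c i` because `c ∘ σ` is a finite combination of the mode
indicators, and comparing time averages gives the bounds.
-/

open MeasureTheory Filter Set

noncomputable def timeAvg (f : ℝ → ℝ) (t : ℝ) : ℝ :=
  (1 / t) * ∫ τ in Ioc (0 : ℝ) t, f τ

lemma integrableOn_comp_of_finite {α I : Type*} [MeasurableSpace α] [Finite I]
    [MeasurableSpace I] [MeasurableSingletonClass I] {μ : Measure α} {s : Set α}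
    (hs : μ s ≠ ⊤) (c : I → ℝ) {σ : α → I} (hσ : Measurable σ) :
    IntegrableOn (fun x => c (σ x)) s μ := by
  obtain ⟨M, hM⟩ := Finite.bddAbove_range fun i => |c i|
  refine Measure.integrableOn_of_bounded (M := M) hs
    ((measurable_of_finite c).comp hσ).aestronglyMeasurable (ae_of_all _ fun x => ?_)
  exact hM (mem_range_self (σ x))

lemma ae_restrict_Ioc_of_ae_restrict_Ici {P : ℝ → Prop}
    (h : ∀ᵐ τ ∂(volume.restrict (Ici (0 : ℝ))), P τ) (t : ℝ) :
    ∀ᵐ τ ∂(volume.restrict (Ioc 0 t)), P τ :=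
  ae_restrict_of_ae_restrict_of_subset (Ioc_subset_Ioi_self.trans Ioi_subset_Ici_self) h

lemma integrableOn_Ioc_of_ae_nonneg_of_le {f g : ℝ → ℝ} (hf : Measurable f)
    (hg : ∀ t, IntegrableOn g (Ioc 0 t))
    (hfg : ∀ᵐ τ ∂(volume.restrict (Ici (0 : ℝ))), 0 ≤ f τ ∧ f τ ≤ g τ) (t : ℝ) :
    IntegrableOn f (Ioc 0 t) := by
  have hfg' := ae_restrict_Ioc_of_ae_restrict_Ici hfg t
  exact integrable_of_le_of_le hf.aestronglyMeasurable (hfg'.mono fun _ h => h.1)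
    (hfg'.mono fun _ h => h.2) (integrable_zero _ _ _) (hg t)

lemma tendsto_timeAvg_const (a : ℝ) : Tendsto (timeAvg fun _ => a) atTop (nhds a) := by
  refine tendsto_const_nhds.congr' ?_
  filter_upwards [eventually_gt_atTop 0] with t ht
  rw [timeAvg, setIntegral_const, Real.volume_real_Ioc_of_le ht.le, smul_eq_mul]
  field_simp
  ring

lemma timeAvg_add {f g : ℝ → ℝ} {t : ℝ} (hf : IntegrableOn f (Ioc 0 t))
    (hg : IntegrableOn g (Ioc 0 t)) :
    timeAvg (fun τ => f τ + g τ) t = timeAvg f t + timeAvg g t := by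
  rw [timeAvg, timeAvg, timeAvg, integral_add hf hg, mul_add]

lemma tendsto_timeAvg_outflow {f g : ℝ → ℝ} {a Q0 : ℝ}
    (hf : ∀ t, IntegrableOn f (Ioc 0 t)) (hg : ∀ t, IntegrableOn g (Ioc 0 t))
    (hin : Tendsto (timeAvg g) atTop (nhds a))
    (hQ : Tendsto (fun t => (Q0 + ∫ τ in Ioc (0 : ℝ) t, (g τ - f τ)) / t) atTop (nhds 0)) :
    Tendsto (timeAvg f) atTop (nhds a) := by
  have hlim := (hin.add ((tendsto_const_nhds (x := Q0)).div_atTop tendsto_id)).sub hQ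
  rw [add_zero, sub_zero] at hlim
  refine hlim.congr' ?_
  filter_upwards [eventually_gt_atTop 0] with t ht
  rw [timeAvg, timeAvg, integral_sub (hg t) (hf t), id]
  field_simp
  ring

lemma timeAvg_comp_eq_sum {I : Type*} [Fintype I] [DecidableEq I] [MeasurableSpace I]
    [MeasurableSingletonClass I] (c : I → ℝ) {σ : ℝ → I} (hσ : Measurable σ) (t : ℝ) :
    timeAvg (fun τ => c (σ τ)) t =
      ∑ i, timeAvg (fun τ => if σ τ = i then (1 : ℝ) else 0) t * c i := by
  have hsum : (fun τ => c (σ τ)) = fun τ => ∑ i, (if σ τ = i then (1 : ℝ) else 0) * c i := by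
    simp [ite_mul]
  have hind (i : I) : IntegrableOn (fun τ => (if σ τ = i then (1 : ℝ) else 0) * c i) (Ioc 0 t) :=
    integrableOn_comp_of_finite measure_Ioc_lt_top.ne (fun j => (if j = i then 1 else 0) * c i) hσ
  simp only [timeAvg, hsum, integral_finsetSum _ fun i _ => hind i, integral_mul_const,
    Finset.mul_sum, mul_assoc]

lemma tendsto_timeAvg_comp {I : Type*} [Fintype I] [DecidableEq I] [MeasurableSpace I]
    [MeasurableSingletonClass I] (c p : I → ℝ) {σ : ℝ → I} (hσ : Measurable σ)
    (hfrac : ∀ i, Tendsto (timeAvg fun τ => if σ τ = i then (1 : ℝ) else 0) atTop (nhds (p i))) :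
    Tendsto (timeAvg fun τ => c (σ τ)) atTop (nhds (∑ i, p i * c i)) := by
  simp only [funext (timeAvg_comp_eq_sum c hσ)]
  exact tendsto_finsetSum _ fun i _ => (hfrac i).mul_const (c i)

lemma le_of_tendsto_timeAvg_of_ae_le {f g : ℝ → ℝ} {a b : ℝ}
    (hf : ∀ t, IntegrableOn f (Ioc 0 t)) (hg : ∀ t, IntegrableOn g (Ioc 0 t))
    (hfg : ∀ᵐ τ ∂(volume.restrict (Ici (0 : ℝ))), f τ ≤ g τ)
    (ha : Tendsto (timeAvg f) atTop (nhds a)) (hb : Tendsto (timeAvg g) atTop (nhds b)) :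
    a ≤ b := by
  refine le_of_tendsto_of_tendsto ha hb ?_
  filter_upwards [eventually_gt_atTop 0] with t ht
  exact mul_le_mul_of_nonneg_left
    (integral_mono_ae (hf t) (hg t) (ae_restrict_Ioc_of_ae_restrict_Ici hfg t)) (by positivity)

theorem merge_queue_necessity_general
    {I : Type*} [Fintype I] [DecidableEq I]
    [MeasurableSpace I] [MeasurableSingletonClass I]
    (c1 c2 c3 p : I → ℝ)
    (a1 a2 : ℝ)
    (σ : ℝ → I) (hσ : Measurable σ)
    (hfrac : ∀ i : I, Tendsto
      (fun t : ℝ => (1 / t) * ∫ τ in Set.Ioc (0 : ℝ) t, (if σ τ = i then (1 : ℝ) else 0))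
      atTop (nhds (p i)))
    (f13 f23 f3 : ℝ → ℝ)
    (hf13 : Measurable f13) (hf23 : Measurable f23) (hf3 : Measurable f3)
    (hbound : ∀ᵐ τ ∂(volume.restrict (Set.Ici (0 : ℝ))),
      (0 ≤ f13 τ ∧ f13 τ ≤ c1 (σ τ)) ∧ (0 ≤ f23 τ ∧ f23 τ ≤ c2 (σ τ)) ∧
        (0 ≤ f3 τ ∧ f3 τ ≤ c3 (σ τ)))
    (Q10 Q20 Q30 : ℝ)
    (hQ1 : Tendsto
      (fun t : ℝ => (Q10 + ∫ τ in Set.Ioc (0 : ℝ) t, (a1 - f13 τ)) / t)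
      atTop (nhds 0))
    (hQ2 : Tendsto
      (fun t : ℝ => (Q20 + ∫ τ in Set.Ioc (0 : ℝ) t, (a2 - f23 τ)) / t)
      atTop (nhds 0))
    (hQ3 : Tendsto
      (fun t : ℝ => (Q30 + ∫ τ in Set.Ioc (0 : ℝ) t, (f13 τ + f23 τ - f3 τ)) / t)
      atTop (nhds 0)) :
    a1 ≤ ∑ i : I, p i * c1 i ∧ a2 ≤ ∑ i : I, p i * c2 i ∧
      a1 + a2 ≤ ∑ i : I, p i * c3 i := by
  have hcap (c : I → ℝ) (t : ℝ) : IntegrableOn (fun τ => c (σ τ)) (Ioc 0 t) :=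
    integrableOn_comp_of_finite measure_Ioc_lt_top.ne c hσ
  have hconst (a : ℝ) (t : ℝ) : IntegrableOn (fun _ => a) (Ioc 0 t) :=
    integrableOn_const measure_Ioc_lt_top.ne
  have h13 := integrableOn_Ioc_of_ae_nonneg_of_le hf13 (hcap c1) (hbound.mono fun _ h => h.1)
  have h23 := integrableOn_Ioc_of_ae_nonneg_of_le hf23 (hcap c2) (hbound.mono fun _ h => h.2.1)
  have h3 := integrableOn_Ioc_of_ae_nonneg_of_le hf3 (hcap c3) (hbound.mono fun _ h => h.2.2)
  have lim13 := tendsto_timeAvg_outflow h13 (hconst a1) (tendsto_timeAvg_const a1) hQ1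
  have lim23 := tendsto_timeAvg_outflow h23 (hconst a2) (tendsto_timeAvg_const a2) hQ2
  have lim3 := tendsto_timeAvg_outflow h3 (fun t => (h13 t).add (h23 t))
    ((lim13.add lim23).congr fun t => (timeAvg_add (h13 t) (h23 t)).symm) hQ3
  have le_cap {f : ℝ → ℝ} {a : ℝ} (c : I → ℝ) (hf : ∀ t, IntegrableOn f (Ioc 0 t))
      (hfc : ∀ᵐ τ ∂(volume.restrict (Ici (0 : ℝ))), f τ ≤ c (σ τ))
      (ha : Tendsto (timeAvg f) atTop (nhds a)) : a ≤ ∑ i, p i * c i :=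
    le_of_tendsto_timeAvg_of_ae_le hf (hcap c) hfc ha (tendsto_timeAvg_comp c p hσ hfrac)
  exact ⟨le_cap c1 h13 (hbound.mono fun _ h => h.1.2) lim13,
    le_cap c2 h23 (hbound.mono fun _ h => h.2.1.2) lim23,
    le_cap c3 h3 (hbound.mono fun _ h => h.2.2.2) lim3⟩

/-- Pathwise core of the necessity direction of Theorem 3 (merge fluid queue):
if all three queue lengths grow sublinearly, the flows are nonnegative and
bounded by the mode-dependent capacities, and the switching signal spends
asymptotic time fraction `p i` in mode `i`, then `a1`, `a2`, and `a1 + a2` are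
bounded by the corresponding time-averaged capacities. -/
theorem merge_queue_necessity
    {I : Type*} [Fintype I] [Nonempty I] [DecidableEq I]
    [MeasurableSpace I] [MeasurableSingletonClass I]
    (c1 c2 c3 p : I → ℝ)
    (hc1 : ∀ i, 0 ≤ c1 i) (hc2 : ∀ i, 0 ≤ c2 i) (hc3 : ∀ i, 0 ≤ c3 i)
    (hp : ∀ i, 0 ≤ p i)
    (a1 a2 : ℝ) (ha1 : 0 ≤ a1) (ha2 : 0 ≤ a2)
    (σ : ℝ → I) (hσ : Measurable σ)
    (hfrac : ∀ i : I, Tendsto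
      (fun t : ℝ => (1 / t) * ∫ τ in Set.Ioc (0 : ℝ) t, (if σ τ = i then (1 : ℝ) else 0))
      atTop (nhds (p i)))
    (f13 f23 f3 : ℝ → ℝ)
    (hf13 : Measurable f13) (hf23 : Measurable f23) (hf3 : Measurable f3)
    (hbound : ∀ᵐ τ ∂(volume.restrict (Set.Ici (0 : ℝ))),
      (0 ≤ f13 τ ∧ f13 τ ≤ c1 (σ τ)) ∧ (0 ≤ f23 τ ∧ f23 τ ≤ c2 (σ τ)) ∧
        (0 ≤ f3 τ ∧ f3 τ ≤ c3 (σ τ)))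
    (Q10 Q20 Q30 : ℝ)
    (hQ1 : Tendsto
      (fun t : ℝ => (Q10 + ∫ τ in Set.Ioc (0 : ℝ) t, (a1 - f13 τ)) / t)
      atTop (nhds 0))
    (hQ2 : Tendsto
      (fun t : ℝ => (Q20 + ∫ τ in Set.Ioc (0 : ℝ) t, (a2 - f23 τ)) / t)
      atTop (nhds 0))
    (hQ3 : Tendsto
      (fun t : ℝ => (Q30 + ∫ τ in Set.Ioc (0 : ℝ) t, (f13 τ + f23 τ - f3 τ)) / t)
      atTop (nhds 0)) :
    a1 ≤ ∑ i : I, p i * c1 i ∧ a2 ≤ ∑ i : I, p i * c2 i ∧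
      a1 + a2 ≤ ∑ i : I, p i * c3 i :=
  merge_queue_necessity_general c1 c2 c3 p a1 a2 σ hσ hfrac f13 f23 f3 hf13 hf23 hf3 hbound Q10 Q20
    Q30 hQ1 hQ2 hQ3
end
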